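/- arXiv:1009.1584 — 2 statements merged into one kernel-verified Lean document; each statement's English description precedes it below -/
import Mathlib

section
/- With τ_L, τ_R as above (0 < β_L ≤ β_R, λ ∈ ℝ), define for k ∈ (-π, π]: b(e^{ik}) := (τ_L(1)τ_R(-1)/(τ_R(1)τ_L(-1)))^{k/(2π)} · √(τ_R(1)/τ_L(1)) · τ_L(e^{ik}) for 0 ≤ k ≤ π, and := (τ_L(1)τ_R(-1)/(τ_R(1)τ_L(-1)))^{k/(2π)} · √(τ_L(1)/τ_R(1)) · τ_R(e^{ik}) for -π < k < 0. Then b extends to a continuous function on the unit circle 𝕋 (i.e., the one-sided limits at k = 0 and at k = ±π agree). -/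
open Real Set Filter Topology

lemma tanh_lt_one' (x : ℝ) : Real.tanh x < 1 := by
  rw [Real.tanh_eq_sinh_div_cosh, div_lt_one (Real.cosh_pos x)]
  exact Real.sinh_lt_cosh x

lemma continuous_tanh' : Continuous Real.tanh := by
  have : Real.tanh = fun x => Real.sinh x / Real.cosh x := by
    funext x; exact Real.tanh_eq_sinh_div_cosh x
  rw [this]
  exact Real.continuous_sinh.div Real.continuous_cosh fun x => (Real.cosh_pos x).ne'

lemma sqrt_swap' (x y : ℝ) (hx : 0 < x) (hy : 0 < y) :
    Real.sqrt (y / x) * x = Real.sqrt (x * y) := by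
  rw [← Real.sqrt_sq hx.le, ← Real.sqrt_mul (by positivity)]
  congr 1
  field_simp
  nlinarith [Real.sq_sqrt (sq_nonneg x), Real.sqrt_nonneg (x ^ 2)]

lemma sq_eq_of_nonneg' {u v : ℝ} (hu : 0 ≤ u) (hv : 0 ≤ v) (h : u ^ 2 = v ^ 2) : u = v := by
  rw [← Real.sqrt_sq hu, h, Real.sqrt_sq hv]

/-- The regularized symbol b(e^{ik}) = C^{k/(2π)} · √(τ_R(1)/τ_L(1)) τ_L(e^{ik}) for
0 ≤ k ≤ π and C^{k/(2π)} · √(τ_L(1)/τ_R(1)) τ_R(e^{ik}) for -π < k < 0, with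
C = τ_L(1)τ_R(-1)/(τ_R(1)τ_L(-1)), extends to a continuous function on the unit
circle: it is continuous on [-π,π] (in particular the one-sided limits at k = 0
agree) and its values at k = -π and k = π coincide. -/
theorem regularized_symbol_continuous (βL βR lam : ℝ) (h0 : 0 < βL) (hLR : βL ≤ βR) :
    let τ : ℝ → ℝ → ℝ := fun c k => (1 - Real.tanh (c * (lam + Real.cos k) / 2)) / 2
    let C : ℝ := τ βL 0 * τ βR Real.pi / (τ βR 0 * τ βL Real.pi)
    let b : ℝ → ℝ := fun k => C ^ (k / (2 * Real.pi)) *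
      (if 0 ≤ k then Real.sqrt (τ βR 0 / τ βL 0) * τ βL k
       else Real.sqrt (τ βL 0 / τ βR 0) * τ βR k)
    ContinuousOn b (Set.Icc (-Real.pi) Real.pi) ∧ b (-Real.pi) = b Real.pi := by
  intro τ C b
  have hτpos : ∀ c k : ℝ, 0 < τ c k := fun c k => by
    have := tanh_lt_one' (c * (lam + Real.cos k) / 2)
    simp only [τ]; linarith
  have ha := hτpos βL 0
  have hb := hτpos βR 0
  have hc := hτpos βL Real.pi
  have hd := hτpos βR Real.pi
  have hC : 0 < C := div_pos (mul_pos ha hd) (mul_pos hb hc)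
  -- the two smooth branches
  set f1 : ℝ → ℝ := fun k =>
    Real.exp (Real.log C * (k / (2 * Real.pi))) * (Real.sqrt (τ βR 0 / τ βL 0) * τ βL k) with hf1
  set f2 : ℝ → ℝ := fun k =>
    Real.exp (Real.log C * (k / (2 * Real.pi))) * (Real.sqrt (τ βL 0 / τ βR 0) * τ βR k) with hf2
  have hrpow : ∀ k : ℝ, C ^ (k / (2 * Real.pi)) = Real.exp (Real.log C * (k / (2 * Real.pi))) := by
    intro k; rw [Real.rpow_def_of_pos hC]
  have hcont : ∀ c : ℝ, Continuous (τ c) := by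
    intro c
    exact (continuous_const.sub (continuous_tanh'.comp
      ((continuous_const.mul (continuous_const.add Real.continuous_cos)).div_const 2))).div_const 2
  have hcf1 : Continuous f1 :=
    (Real.continuous_exp.comp ((continuous_const.mul (continuous_id.div_const _)))).mul
      (continuous_const.mul (hcont βL))
  have hcf2 : Continuous f2 :=
    (Real.continuous_exp.comp ((continuous_const.mul (continuous_id.div_const _)))).mul
      (continuous_const.mul (hcont βR))
  -- key equality at 0
  have h00 : Real.sqrt (τ βR 0 / τ βL 0) * τ βL 0 = Real.sqrt (τ βL 0 / τ βR 0) * τ βR 0 := by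
    rw [sqrt_swap' _ _ ha hb, sqrt_swap' _ _ hb ha, mul_comm (τ βL 0)]
  constructor
  · have h1 : ContinuousOn b (Set.Icc 0 Real.pi) := by
      apply hcf1.continuousOn.congr
      intro k hk
      simp only [b, hrpow k, if_pos hk.1, f1]
    have h2 : ContinuousOn b (Set.Icc (-Real.pi) 0) := by
      apply hcf2.continuousOn.congr
      intro k hk
      rcases lt_or_eq_of_le hk.2 with h | h
      · simp only [b, hrpow k, if_neg (not_le.mpr h), f2]
      · subst h
        simp only [b, hrpow (0:ℝ), if_pos le_rfl]
        rw [h00]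
    intro x hx
    rw [← Set.Icc_union_Icc_eq_Icc (by linarith [Real.pi_pos] : -Real.pi ≤ (0:ℝ))
      Real.pi_pos.le] at hx ⊢
    rcases hx with hx | hx
    · exact (h2 x hx).union
        (by
          by_cases hx' : x ∈ Set.Icc (0:ℝ) Real.pi
          · exact h1 x hx'
          · exact continuousWithinAt_of_notMem_closure (by rwa [isClosed_Icc.closure_eq]))
    · refine ContinuousWithinAt.union ?_ (h1 x hx)
      by_cases hx' : x ∈ Set.Icc (-Real.pi) (0:ℝ)
      · exact h2 x hx'
      · exact continuousWithinAt_of_notMem_closure (by rwa [isClosed_Icc.closure_eq])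
  · -- boundary values agree
    have hπ : Real.pi ≠ 0 := Real.pi_ne_zero
    have hnneg : ¬ (0 : ℝ) ≤ -Real.pi := by linarith [Real.pi_pos]
    have hτRπ : τ βR (-Real.pi) = τ βR Real.pi := by simp [τ, Real.cos_neg]
    have e1 : -Real.pi / (2 * Real.pi) = -(1/2 : ℝ) := by field_simp
    have e2 : Real.pi / (2 * Real.pi) = (1/2 : ℝ) := by field_simp
    simp only [b, if_pos Real.pi_pos.le, if_neg hnneg, hτRπ, e1, e2]
    rw [Real.rpow_neg hC.le, ← Real.sqrt_eq_rpow]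
    -- now an algebraic identity in positive reals
    apply sq_eq_of_nonneg'
    · exact mul_nonneg (inv_nonneg.mpr (Real.sqrt_nonneg _))
        (mul_nonneg (Real.sqrt_nonneg _) hd.le)
    · exact mul_nonneg (Real.sqrt_nonneg _) (mul_nonneg (Real.sqrt_nonneg _) hc.le)
    rw [mul_pow, mul_pow, mul_pow, mul_pow, inv_pow, Real.sq_sqrt hC.le,
      Real.sq_sqrt (div_nonneg ha.le hb.le), Real.sq_sqrt (div_nonneg hb.le ha.le)]
    show (τ βL 0 * τ βR Real.pi / (τ βR 0 * τ βL Real.pi))⁻¹ *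
        (τ βL 0 / τ βR 0 * τ βR Real.pi ^ 2) =
      τ βL 0 * τ βR Real.pi / (τ βR 0 * τ βL Real.pi) *
        (τ βR 0 / τ βL 0 * τ βL Real.pi ^ 2)
    field_simp
end

section
/- The regularized symbol b (as defined above) is continuously differentiable on the unit circle: the restrictions to the open upper and lower half-circles are smooth, and at the points t = 1 and t = -1 the one-sided derivatives of b exist and coincide; specifically at t_j ∈ {1,-1}, D₊b(t_j) = D₋b(t_j) = (1/2π)√(τ_R(t_j)τ_L(t_j)) · log(τ_L(1)τ_R(-1)/(τ_R(1)τ_L(-1))). -/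
open Real Set Filter Topology

/-- The regularized symbol b is C¹ on the circle: it is smooth on the open upper and
lower half-circles, and at the jump points t₁ = 1 (k = 0) and t₂ = -1 (k = ±π) the
one-sided angular derivatives exist and coincide, being equal to
(1/2π)√(τ_R(t_j)τ_L(t_j)) · log(τ_L(1)τ_R(-1)/(τ_R(1)τ_L(-1))). -/
theorem regularized_symbol_C1 (βL βR lam : ℝ) (h0 : 0 < βL) (hLR : βL ≤ βR) :
    let τ : ℝ → ℝ → ℝ := fun c k => (1 - Real.tanh (c * (lam + Real.cos k) / 2)) / 2
    let C : ℝ := τ βL 0 * τ βR Real.pi / (τ βR 0 * τ βL Real.pi)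
    let b : ℝ → ℝ := fun k => C ^ (k / (2 * Real.pi)) *
      (if 0 ≤ k then Real.sqrt (τ βR 0 / τ βL 0) * τ βL k
       else Real.sqrt (τ βL 0 / τ βR 0) * τ βR k)
    let D : ℝ → ℝ := fun x => (1 / (2 * Real.pi)) * Real.sqrt (τ βR x * τ βL x) * Real.log C
    ContDiffOn ℝ (⊤ : ℕ∞) b (Set.Ioo 0 Real.pi) ∧
    ContDiffOn ℝ (⊤ : ℕ∞) b (Set.Ioo (-Real.pi) 0) ∧
    HasDerivWithinAt b (D 0) (Set.Ici 0) 0 ∧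
    HasDerivWithinAt b (D 0) (Set.Iic 0) 0 ∧
    HasDerivWithinAt b (D Real.pi) (Set.Iic Real.pi) Real.pi ∧
    HasDerivWithinAt b (D Real.pi) (Set.Ici (-Real.pi)) (-Real.pi) := by
  intro τ C b D
  have hπ : (0:ℝ) < Real.pi := Real.pi_pos
  -- positivity of τ
  have htanh : ∀ x : ℝ, Real.tanh x < 1 := by
    intro x
    rw [Real.tanh_eq_sinh_div_cosh, div_lt_one (Real.cosh_pos x)]
    nlinarith [Real.cosh_sub_sinh x, Real.exp_pos (-x)]
  have hτpos : ∀ c k, 0 < τ c k := by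
    intro c k
    have := htanh (c * (lam + Real.cos k) / 2)
    simp only [τ]; linarith
  have hC : 0 < C := by
    simp only [C]
    exact div_pos (mul_pos (hτpos _ _) (hτpos _ _)) (mul_pos (hτpos _ _) (hτpos _ _))
  -- τ at -π equals τ at π
  have hτneg : ∀ c, τ c (-Real.pi) = τ c Real.pi := by
    intro c; simp only [τ, Real.cos_neg]
  -- smoothness of τ c
  have htanhsmooth : ContDiff ℝ (⊤ : ℕ∞) Real.tanh := by
    have : Real.tanh = fun x => Real.sinh x / Real.cosh x := funext Real.tanh_eq_sinh_div_cosh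
    rw [this]
    exact Real.contDiff_sinh.div Real.contDiff_cosh fun x => (Real.cosh_pos x).ne'
  have hτsmooth : ∀ c, ContDiff ℝ (⊤ : ℕ∞) (fun k => τ c k) := by
    intro c
    simp only [τ]
    exact (contDiff_const.sub (htanhsmooth.comp
      ((contDiff_const.mul (contDiff_const.add Real.contDiff_cos)).div_const 2))).div_const 2
  -- smoothness of the rpow factor
  have hCrpow : ContDiff ℝ (⊤ : ℕ∞) (fun k : ℝ => C ^ (k / (2 * Real.pi))) := by
    have : (fun k : ℝ => C ^ (k / (2 * Real.pi)))
        = fun k => Real.exp (Real.log C * (k / (2 * Real.pi))) := by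
      funext k; rw [Real.rpow_def_of_pos hC]
    rw [this]
    exact Real.contDiff_exp.comp (contDiff_const.mul (contDiff_id.div_const _))
  -- the two smooth branches
  set Ap : ℝ := Real.sqrt (τ βR 0 / τ βL 0) with hAp
  set Am : ℝ := Real.sqrt (τ βL 0 / τ βR 0) with hAm
  set gp : ℝ → ℝ := fun k => C ^ (k / (2 * Real.pi)) * (Ap * τ βL k) with hgp
  set gm : ℝ → ℝ := fun k => C ^ (k / (2 * Real.pi)) * (Am * τ βR k) with hgm
  have hgpsmooth : ContDiff ℝ (⊤ : ℕ∞) gp := hCrpow.mul (contDiff_const.mul (hτsmooth βL))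
  have hgmsmooth : ContDiff ℝ (⊤ : ℕ∞) gm := hCrpow.mul (contDiff_const.mul (hτsmooth βR))
  -- b agrees with branches
  have hbp : ∀ x, 0 ≤ x → b x = gp x := by
    intro x hx; simp only [b, gp, if_pos hx]; rfl
  have hbm : ∀ x, x < 0 → b x = gm x := by
    intro x hx; simp only [b, gm, if_neg (not_le.mpr hx)]; rfl
  -- derivative of rpow factor
  have hCpowd : ∀ x : ℝ, HasDerivAt (fun k : ℝ => C ^ (k / (2 * Real.pi)))
      (C ^ (x / (2 * Real.pi)) * (Real.log C / (2 * Real.pi))) x := by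
    intro x
    have heq : (fun k : ℝ => C ^ (k / (2 * Real.pi)))
        = fun k => Real.exp (Real.log C * (k / (2 * Real.pi))) := by
      funext k; rw [Real.rpow_def_of_pos hC]
    have h1 : HasDerivAt (fun k : ℝ => Real.log C * (k / (2 * Real.pi)))
        (Real.log C * (1 / (2 * Real.pi))) x :=
      ((hasDerivAt_id x).div_const (2 * Real.pi)).const_mul (Real.log C)
    have h2 := h1.exp
    rw [← heq] at h2
    rw [Real.rpow_def_of_pos hC]
    convert h2 using 1
    ring
  -- derivative of τ c vanishes where sin x = 0
  have hτd : ∀ c x, Real.sin x = 0 → HasDerivAt (fun k => τ c k) 0 x := by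
    intro c x hx
    have hu : HasDerivAt (fun k : ℝ => c * (lam + Real.cos k) / 2)
        (c * (-Real.sin x) / 2) x :=
      (((Real.hasDerivAt_cos x).const_add lam).const_mul c).div_const 2
    have ht : HasDerivAt Real.tanh
        ((Real.cosh (c * (lam + Real.cos x) / 2) * Real.cosh (c * (lam + Real.cos x) / 2)
          - Real.sinh (c * (lam + Real.cos x) / 2) * Real.sinh (c * (lam + Real.cos x) / 2))
          / Real.cosh (c * (lam + Real.cos x) / 2) ^ 2) (c * (lam + Real.cos x) / 2) := by
      have hth : Real.tanh = fun y => Real.sinh y / Real.cosh y :=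
        funext Real.tanh_eq_sinh_div_cosh
      rw [hth]
      exact (Real.hasDerivAt_sinh _).div (Real.hasDerivAt_cosh _) (Real.cosh_pos _).ne'
    have h3 := ((ht.comp x hu).const_sub 1).div_const 2
    simp only [τ]
    exact h3.congr_deriv (by simp [Function.comp, hx])
  -- derivatives of the branches at points where sin vanishes
  have hgdp : ∀ x, Real.sin x = 0 → HasDerivAt gp
      (C ^ (x / (2 * Real.pi)) * (Real.log C / (2 * Real.pi)) * (Ap * τ βL x)) x := by
    intro x hx
    have := (hCpowd x).mul ((hτd βL x hx).const_mul Ap)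
    exact this.congr_deriv (by simp)
  have hgdm : ∀ x, Real.sin x = 0 → HasDerivAt gm
      (C ^ (x / (2 * Real.pi)) * (Real.log C / (2 * Real.pi)) * (Am * τ βR x)) x := by
    intro x hx
    have := (hCpowd x).mul ((hτd βR x hx).const_mul Am)
    exact this.congr_deriv (by simp)
  -- sqrt algebra
  have sq_key : ∀ u v : ℝ, 0 ≤ u → u ^ 2 = v → u = Real.sqrt v := by
    intro u v hu h; rw [← h, Real.sqrt_sq hu]
  have hApsq : Ap ^ 2 = τ βR 0 / τ βL 0 :=
    Real.sq_sqrt (div_nonneg (hτpos _ _).le (hτpos _ _).le)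
  have hAmsq : Am ^ 2 = τ βL 0 / τ βR 0 :=
    Real.sq_sqrt (div_nonneg (hτpos _ _).le (hτpos _ _).le)
  have hAppos : 0 ≤ Ap := Real.sqrt_nonneg _
  have hAmpos : 0 ≤ Am := Real.sqrt_nonneg _
  have arith : ∀ a c : ℝ, 0 < c → a / c * c ^ 2 = a * c := by
    intro a c hc; field_simp
  have key0p : Ap * τ βL 0 = Real.sqrt (τ βR 0 * τ βL 0) := by
    apply sq_key _ _ (mul_nonneg hAppos (hτpos _ _).le)
    rw [mul_pow, hApsq, arith _ _ (hτpos βL 0)]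
  have key0m : Am * τ βR 0 = Real.sqrt (τ βR 0 * τ βL 0) := by
    apply sq_key _ _ (mul_nonneg hAmpos (hτpos _ _).le)
    rw [mul_pow, hAmsq, arith _ _ (hτpos βR 0), mul_comm]
  have he1 : Real.pi / (2 * Real.pi) = (1:ℝ)/2 := by
    field_simp [Real.pi_ne_zero]
  have he2 : -Real.pi / (2 * Real.pi) = -((1:ℝ)/2) := by
    rw [neg_div, he1]
  have hCsq : (C ^ ((1:ℝ)/2)) ^ 2 = C := by
    rw [pow_two, ← Real.rpow_add hC]; norm_num
  have hCmsq : (C ^ (-((1:ℝ)/2))) ^ 2 = C⁻¹ := by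
    rw [pow_two, ← Real.rpow_add hC]; norm_num [Real.rpow_neg_one]
  have genp : ∀ L0 R0 Lp Rp : ℝ, 0 < L0 → 0 < R0 → 0 < Lp → 0 < Rp →
      L0 * Rp / (R0 * Lp) * (R0 / L0 * Lp ^ 2) = Rp * Lp := by
    intro L0 R0 Lp Rp h1 h2 h3 h4; field_simp
  have genm : ∀ L0 R0 Lp Rp : ℝ, 0 < L0 → 0 < R0 → 0 < Lp → 0 < Rp →
      (L0 * Rp / (R0 * Lp))⁻¹ * (L0 / R0 * Rp ^ 2) = Rp * Lp := by
    intro L0 R0 Lp Rp h1 h2 h3 h4; field_simp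
  have keyπp : C ^ (Real.pi / (2 * Real.pi)) * (Ap * τ βL Real.pi)
      = Real.sqrt (τ βR Real.pi * τ βL Real.pi) := by
    rw [he1]
    apply sq_key _ _ (mul_nonneg (Real.rpow_nonneg hC.le _)
      (mul_nonneg hAppos (hτpos _ _).le))
    rw [mul_pow, mul_pow, hCsq, hApsq]
    simp only [C]
    exact genp _ _ _ _ (hτpos βL 0) (hτpos βR 0) (hτpos βL Real.pi) (hτpos βR Real.pi)
  have keyπm : C ^ (-Real.pi / (2 * Real.pi)) * (Am * τ βR (-Real.pi))
      = Real.sqrt (τ βR Real.pi * τ βL Real.pi) := by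
    rw [he2, hτneg]
    apply sq_key _ _ (mul_nonneg (Real.rpow_nonneg hC.le _)
      (mul_nonneg hAmpos (hτpos _ _).le))
    rw [mul_pow, mul_pow, hCmsq, hAmsq]
    simp only [C]
    exact genm _ _ _ _ (hτpos βL 0) (hτpos βR 0) (hτpos βL Real.pi) (hτpos βR Real.pi)
  -- derivative values equal D
  have hD0p : C ^ ((0:ℝ) / (2 * Real.pi)) * (Real.log C / (2 * Real.pi)) * (Ap * τ βL 0)
      = D 0 := by
    simp only [D]
    rw [key0p, zero_div, Real.rpow_zero]; ring
  have hD0m : C ^ ((0:ℝ) / (2 * Real.pi)) * (Real.log C / (2 * Real.pi)) * (Am * τ βR 0)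
      = D 0 := by
    simp only [D]
    rw [key0m, zero_div, Real.rpow_zero]; ring
  have hDπp : C ^ (Real.pi / (2 * Real.pi)) * (Real.log C / (2 * Real.pi)) * (Ap * τ βL Real.pi)
      = D Real.pi := by
    simp only [D]
    rw [← keyπp]; ring
  have hDπm : C ^ (-Real.pi / (2 * Real.pi)) * (Real.log C / (2 * Real.pi))
      * (Am * τ βR (-Real.pi)) = D Real.pi := by
    simp only [D]
    rw [← keyπm]; ring
  -- b 0 = gm 0 as well
  have hb0m : b 0 = gm 0 := by
    rw [hbp 0 le_rfl]
    simp only [gp, gm]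
    congr 1
    rw [key0p, key0m]
  refine ⟨?_, ?_, ?_, ?_, ?_, ?_⟩
  · exact hgpsmooth.contDiffOn.congr fun x hx => hbp x hx.1.le
  · exact hgmsmooth.contDiffOn.congr fun x hx => hbm x hx.2
  · rw [← hD0p]
    exact ((hgdp 0 Real.sin_zero).hasDerivWithinAt).congr
      (fun y hy => hbp y hy) (hbp 0 le_rfl)
  · rw [← hD0m]
    refine ((hgdm 0 Real.sin_zero).hasDerivWithinAt).congr (fun y hy => ?_) hb0m
    rcases lt_or_eq_of_le (Set.mem_Iic.mp hy) with h | h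
    · exact hbm y h
    · rw [h]; exact hb0m
  · rw [← hDπp]
    refine ((hgdp Real.pi Real.sin_pi).hasDerivWithinAt).congr_of_eventuallyEq ?_
      (hbp Real.pi hπ.le)
    filter_upwards [mem_nhdsWithin_of_mem_nhds (Ioi_mem_nhds hπ)] with y hy
    exact hbp y (le_of_lt hy)
  · rw [← hDπm]
    refine ((hgdm (-Real.pi) (by simp)).hasDerivWithinAt).congr_of_eventuallyEq ?_
      (hbm (-Real.pi) (by linarith))
    filter_upwards [mem_nhdsWithin_of_mem_nhds (Iio_mem_nhds (by linarith : -Real.pi < 0))]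
      with y hy
    exact hbm y hy
end
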